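/- Let d_1, d_2 be even numbers and d = d_1+d_2. Let λ_1, λ_1' be special orthogonal partitions of d_1 and λ_2, λ_2' special orthogonal partitions of d_2, and suppose λ_1 ≤ λ_1' and λ_2 ≤ λ_2' in dominance order. Then W(λ_1,λ_2) ≤ W(λ_1',λ_2') in dominance order, where both Waldspurger sequences are formed with the type D data. -/

import Mathlib

/-- `f` is a partition of `d`: weakly decreasing, finitely many nonzero terms, total sum `d`.
    Indexing is 0-based: `f j` is the `(j+1)`-st part. -/
def IsPartitionOf (f : ℕ → ℕ) (d : ℕ) : Prop :=
  Antitone f ∧ ∃ N, (∀ j, N ≤ j → f j = 0) ∧ ∑ j ∈ Finset.range N, f j = d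

/-- Transpose of a partition (0-based): `ptrans f k` = #{j : f j ≥ k+1}, i.e. `(f^t)_{k+1}`. -/
noncomputable def ptrans (f : ℕ → ℕ) : ℕ → ℕ := fun k => Nat.card {j : ℕ // k + 1 ≤ f j}

/-- Multiplicity of the part `k` in `f` (meaningful for `k > 0`). -/
noncomputable def pmult (f : ℕ → ℕ) (k : ℕ) : ℕ := Nat.card {j : ℕ // f j = k}

/-- Orthogonal: every even positive part occurs with even multiplicity. -/
def IsOrthogonal (f : ℕ → ℕ) : Prop := ∀ k, 0 < k → Even k → Even (pmult f k)

/-- Symplectic: every odd positive part occurs with even multiplicity. -/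
def IsSymplectic (f : ℕ → ℕ) : Prop := ∀ k, 0 < k → Odd k → Even (pmult f k)

/-- Dominance order for ℕ-valued sequences. -/
def NDomLE (f g : ℕ → ℕ) : Prop :=
  ∀ N, ∑ j ∈ Finset.range N, f j ≤ ∑ j ∈ Finset.range N, g j

/-- Dominance order for ℤ-valued sequences. -/
def DomLE (f g : ℕ → ℤ) : Prop :=
  ∀ N, ∑ j ∈ Finset.range N, f j ≤ ∑ j ∈ Finset.range N, g j

/-- `ν` is the `P`-collapse of `μ` (both of total size `m`): `ν` is a partition of `m`
    satisfying `P`, `ν ≤ μ`, and every partition `σ` of `m` satisfying `P` with `σ ≤ μ`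
    satisfies `σ ≤ ν`. -/
def IsCollapse (P : (ℕ → ℕ) → Prop) (m : ℕ) (μ ν : ℕ → ℕ) : Prop :=
  IsPartitionOf ν m ∧ P ν ∧ NDomLE ν μ ∧
    ∀ σ, IsPartitionOf σ m → P σ → NDomLE σ μ → NDomLE σ ν

/-- B-collapse (largest orthogonal partition below `μ`, `m` odd). -/
def IsBCollapse : ℕ → (ℕ → ℕ) → (ℕ → ℕ) → Prop := IsCollapse IsOrthogonal
/-- C-collapse (largest symplectic partition below `μ`, `m` even). -/
def IsCCollapse : ℕ → (ℕ → ℕ) → (ℕ → ℕ) → Prop := IsCollapse IsSymplectic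
/-- D-collapse (largest orthogonal partition below `μ`, `m` even). -/
def IsDCollapse : ℕ → (ℕ → ℕ) → (ℕ → ℕ) → Prop := IsCollapse IsOrthogonal

/-- `μ^−` : decrease the smallest nonzero part by 1. -/
def minusOne (f : ℕ → ℕ) : ℕ → ℕ :=
  fun j => if 0 < f j ∧ f (j+1) = 0 then f j - 1 else f j

/-- `μ^+` : increase the largest part by 1. -/
def plusOne (f : ℕ → ℕ) : ℕ → ℕ := fun j => if j = 0 then f 0 + 1 else f j

/-- `u = f ∪ g` : `u` is weakly decreasing, finitely supported, and every positive
    part occurs in `u` with multiplicity the sum of its multiplicities in `f` and `g`. -/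
def IsUnionOf (u f g : ℕ → ℕ) : Prop :=
  Antitone u ∧ (∃ N, ∀ j, N ≤ j → u j = 0) ∧
    ∀ k, 0 < k → pmult u k = pmult f k + pmult g k

/-- The sequence ξ attached to `(f, g, ε₁, ε₂, d)`.  Index `j` here corresponds to the
    1-based index `j+1` of the paper. -/
def xiSeq (f g : ℕ → ℕ) (e1 e2 d : ℕ) : ℕ → ℤ := fun j =>
  if (j + 1) % 2 = (d + 1) % 2 ∧ f j % 2 = e1 ∧ g j % 2 = e2 ∧
      (j = 0 ∨ f j + g j < f (j - 1) + g (j - 1)) then 1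
  else if (j + 1) % 2 = d % 2 ∧ f j % 2 = e1 ∧ g j % 2 = e2 ∧
      f (j + 1) + g (j + 1) < f j + g j then -1
  else 0

/-- The Waldspurger sequence `W(f,g) = f + g + ξ` (ℤ-valued a priori). -/
def wald (f g : ℕ → ℕ) (e1 e2 d : ℕ) : ℕ → ℤ :=
  fun j => (f j : ℤ) + (g j : ℤ) + xiSeq f g e1 e2 d j

/-!
If the transpose of a partition is symplectic, its rows `2i` and `2i + 1` (0-based) have the
same parity, so its partial sums of even length are even. With `ε₁ = ε₂ = 1` and `d` even, the
`+1` and `-1` entries of `ξ` then cancel in consecutive pairs and every partial sum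
`∑_{j ≤ m} ξ_j` is `0` or `1` (`xiCarry`). So `W(λ₁, λ₂) ≤ W(λ₁', λ₂')` holds trivially at every
length where `λ₁ + λ₂ ≤ λ₁' + λ₂'` is strict. Where it is tight, both dominances are tight, which
forces `λ₁', λ₂'` to have the same parities at `m` (for `m` even) or the same flat step from `m`
to `m + 1` (for `m` odd) as `λ₁, λ₂`, so their carry is `1` as well.
-/

section Transpose

variable {f : ℕ → ℕ}

theorem lt_ptrans_iff (hf : Antitone f) (hfin : ∃ N, ∀ j, N ≤ j → f j = 0) (k i : ℕ) :
    i < ptrans f k ↔ k + 1 ≤ f i := by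
  have hex : ∃ i, f i ≤ k := hfin.imp fun N hN => by simp [hN N le_rfl]
  have key : ∀ i, k + 1 ≤ f i ↔ i ∈ Finset.range (Nat.find hex) := fun i => by
    rw [Finset.mem_range]
    exact ⟨fun h => lt_of_not_ge fun hge => by
      have := hf hge; have := Nat.find_spec hex; omega,
     fun h => by have := Nat.find_min hex h; omega⟩
  have hcard : ptrans f k = Nat.find hex := by
    rw [ptrans, Nat.card_congr (Equiv.subtypeEquivRight key)]
    exact (Nat.card_eq_finsetCard _).trans (Finset.card_range _)
  rw [hcard, key, Finset.mem_range]

theorem pmult_ptrans_succ (hf : Antitone f) (hfin : ∃ N, ∀ j, N ≤ j → f j = 0) (v : ℕ) :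
    pmult (ptrans f) (v + 1) = f v - f (v + 1) := by
  have key : ∀ k, ptrans f k = v + 1 ↔ k ∈ Finset.Ico (f (v + 1)) (f v) := fun k => by
    have h₀ := lt_ptrans_iff hf hfin k v
    have h₁ := lt_ptrans_iff hf hfin k (v + 1)
    rw [Finset.mem_Ico]
    omega
  rw [pmult, Nat.card_congr (Equiv.subtypeEquivRight key)]
  exact (Nat.card_eq_finsetCard _).trans (Nat.card_Ico _ _)

end Transpose

/-- In the paper's 1-based indexing: `λ_{2i+1} ≡ λ_{2i+2} (mod 2)`. -/
def ParityPaired (f : ℕ → ℕ) : Prop := ∀ i, f (2 * i) % 2 = f (2 * i + 1) % 2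

theorem ParityPaired.of_isSymplectic_ptrans {f : ℕ → ℕ} (hf : Antitone f)
    (hfin : ∃ N, ∀ j, N ≤ j → f j = 0) (hs : IsSymplectic (ptrans f)) : ParityPaired f := by
  intro i
  have hmult := hs (2 * i + 1) (by omega) (odd_two_mul_add_one i)
  rw [pmult_ptrans_succ hf hfin, Nat.even_sub (hf (by omega)), Nat.even_iff, Nat.even_iff]
    at hmult
  omega

theorem ParityPaired.sum_range_two_mul_mod_two {f : ℕ → ℕ} (hf : ParityPaired f) (i : ℕ) :
    (∑ j ∈ Finset.range (2 * i), f j) % 2 = 0 := by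
  induction i with
  | zero => simp
  | succ i ih =>
    rw [Nat.mul_succ, Finset.sum_range_succ, Finset.sum_range_succ]
    have := hf i
    omega

/-- The value of `∑_{j ≤ m} ξ_j` for type D data (`sum_range_succ_xiSeq`): a `+1` at an even
index with both rows odd survives past the next index only if `f + g` does not drop there. -/
def xiCarry (f g : ℕ → ℕ) (m : ℕ) : ℤ :=
  if f m % 2 = 1 ∧ g m % 2 = 1 ∧ (m % 2 = 0 ∨ f (m + 1) + g (m + 1) = f m + g m) then 1 else 0

theorem xiCarry_nonneg (f g : ℕ → ℕ) (m : ℕ) : 0 ≤ xiCarry f g m := by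
  unfold xiCarry; split_ifs <;> norm_num

theorem xiCarry_le_one (f g : ℕ → ℕ) (m : ℕ) : xiCarry f g m ≤ 1 := by
  unfold xiCarry; split_ifs <;> norm_num

section Xi

variable {f g : ℕ → ℕ} {d : ℕ}

theorem sum_range_succ_xiSeq (hf : Antitone f) (hg : Antitone g)
    (hpf : ParityPaired f) (hpg : ParityPaired g) (hd : Even d) (m : ℕ) :
    ∑ j ∈ Finset.range (m + 1), xiSeq f g 1 1 d j = xiCarry f g m := by
  have hd0 : d % 2 = 0 := Nat.even_iff.mp hd
  have hd1 : (d + 1) % 2 = 1 := by omega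
  induction m with
  | zero => simp [xiSeq, xiCarry, hd0, hd1]
  | succ m ih =>
    rw [Finset.sum_range_succ, ih]
    have hfm : f (m + 1) ≤ f m := hf (by omega)
    have hgm : g (m + 1) ≤ g m := hg (by omega)
    have hfm' : f (m + 1 + 1) ≤ f (m + 1) := hf (by omega)
    have hgm' : g (m + 1 + 1) ≤ g (m + 1) := hg (by omega)
    obtain ⟨i, rfl | rfl⟩ := Nat.even_or_odd' m <;> have := hpf i <;> have := hpg i <;>
      simp only [xiSeq, xiCarry, Nat.add_sub_cancel, Nat.add_one_ne_zero, false_or] <;>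
      split_ifs <;> omega

theorem sum_range_succ_wald (hf : Antitone f) (hg : Antitone g)
    (hpf : ParityPaired f) (hpg : ParityPaired g) (hd : Even d) (m : ℕ) :
    ∑ j ∈ Finset.range (m + 1), wald f g 1 1 d j =
      ((∑ j ∈ Finset.range (m + 1), f j : ℕ) : ℤ) + (∑ j ∈ Finset.range (m + 1), g j : ℕ) +
        xiCarry f g m := by
  simp only [wald, Finset.sum_add_distrib, Nat.cast_sum,
    sum_range_succ_xiSeq hf hg hpf hpg hd]

end Xi

section TightDominance

variable {f f' : ℕ → ℕ} {m : ℕ}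

theorem mod_two_eq_of_sum_range_eq (hf : ParityPaired f) (hf' : ParityPaired f') (i : ℕ)
    (htight : ∑ j ∈ Finset.range (2 * i + 1), f j = ∑ j ∈ Finset.range (2 * i + 1), f' j) :
    f' (2 * i) % 2 = f (2 * i) % 2 := by
  simp only [Finset.sum_range_succ] at htight
  have := hf.sum_range_two_mul_mod_two i
  have := hf'.sum_range_two_mul_mod_two i
  omega

theorem eq_of_sum_range_eq (hf' : Antitone f') (hle : NDomLE f f')
    (htight : ∑ j ∈ Finset.range (m + 1), f j = ∑ j ∈ Finset.range (m + 1), f' j)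
    (hflat : f (m + 1) = f m) : f' m = f m ∧ f' (m + 1) = f m := by
  have hm := hle m
  have hm2 := hle (m + 1 + 1)
  simp only [Finset.sum_range_succ] at hm2 htight
  have : f' (m + 1) ≤ f' m := hf' (by omega)
  omega

end TightDominance

theorem xiCarry_mono {f g f' g' : ℕ → ℕ} (hf : Antitone f) (hg : Antitone g)
    (hf' : Antitone f') (hg' : Antitone g') (hpf : ParityPaired f) (hpg : ParityPaired g)
    (hpf' : ParityPaired f') (hpg' : ParityPaired g') (hle₁ : NDomLE f f') (hle₂ : NDomLE g g')
    {m : ℕ} (htight₁ : ∑ j ∈ Finset.range (m + 1), f j = ∑ j ∈ Finset.range (m + 1), f' j)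
    (htight₂ : ∑ j ∈ Finset.range (m + 1), g j = ∑ j ∈ Finset.range (m + 1), g' j) :
    xiCarry f g m ≤ xiCarry f' g' m := by
  unfold xiCarry
  split_ifs with h
  · exact le_rfl
  · exfalso
    obtain ⟨hfm, hgm, heven | hflat⟩ := h
    · obtain ⟨i, rfl⟩ : ∃ i, m = 2 * i := ⟨m / 2, by omega⟩
      have := mod_two_eq_of_sum_range_eq hpf hpf' i htight₁
      have := mod_two_eq_of_sum_range_eq hpg hpg' i htight₂
      omega
    · have : f (m + 1) ≤ f m := hf (by omega)
      have : g (m + 1) ≤ g m := hg (by omega)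
      have := eq_of_sum_range_eq hf' hle₁ htight₁ (by omega)
      have := eq_of_sum_range_eq hg' hle₂ htight₂ (by omega)
      omega
  · exact zero_le_one
  · exact le_rfl

theorem stmt8_general (d1 d2 : ℕ) (hd1 : Even d1) (hd2 : Even d2)
    (lam1 lam1' lam2 lam2' : ℕ → ℕ)
    (h1 : IsPartitionOf lam1 d1)
    (h1s : IsSymplectic (ptrans lam1))
    (h1' : IsPartitionOf lam1' d1)
    (h1s' : IsSymplectic (ptrans lam1'))
    (h2 : IsPartitionOf lam2 d2)
    (h2s : IsSymplectic (ptrans lam2))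
    (h2' : IsPartitionOf lam2' d2)
    (h2s' : IsSymplectic (ptrans lam2'))
    (hle1 : NDomLE lam1 lam1') (hle2 : NDomLE lam2 lam2') :
    DomLE (wald lam1 lam2 1 1 (d1+d2)) (wald lam1' lam2' 1 1 (d1+d2)) := by
  have hp1 := ParityPaired.of_isSymplectic_ptrans h1.1 (h1.2.imp fun _ => And.left) h1s
  have hp1' := ParityPaired.of_isSymplectic_ptrans h1'.1 (h1'.2.imp fun _ => And.left) h1s'
  have hp2 := ParityPaired.of_isSymplectic_ptrans h2.1 (h2.2.imp fun _ => And.left) h2s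
  have hp2' := ParityPaired.of_isSymplectic_ptrans h2'.1 (h2'.2.imp fun _ => And.left) h2s'
  have hd : Even (d1 + d2) := hd1.add hd2
  rintro (_ | m)
  · simp
  rw [sum_range_succ_wald h1.1 h2.1 hp1 hp2 hd, sum_range_succ_wald h1'.1 h2'.1 hp1' hp2' hd]
  have hS1 := hle1 (m + 1)
  have hS2 := hle2 (m + 1)
  rcases (add_le_add hS1 hS2).eq_or_lt with htight | hlt
  · have := xiCarry_mono h1.1 h2.1 h1'.1 h2'.1 hp1 hp2 hp1' hp2' hle1 hle2 (m := m)
      (by omega) (by omega)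
    omega
  · have := xiCarry_le_one lam1 lam2 m
    have := xiCarry_nonneg lam1' lam2' m
    omega

/-- type D monotonicity.  `d₁, d₂` even, `d = d₁+d₂`; `λ₁ ≤ λ₁'` and
`λ₂ ≤ λ₂'` special orthogonal partitions imply `W(λ₁,λ₂) ≤ W(λ₁',λ₂')` (ε₁=ε₂=1). -/
theorem stmt8 (d1 d2 : ℕ) (hd1 : Even d1) (hd2 : Even d2)
    (lam1 lam1' lam2 lam2' : ℕ → ℕ)
    (h1 : IsPartitionOf lam1 d1) (h1o : IsOrthogonal lam1)
    (h1s : IsSymplectic (ptrans lam1))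
    (h1' : IsPartitionOf lam1' d1) (h1o' : IsOrthogonal lam1')
    (h1s' : IsSymplectic (ptrans lam1'))
    (h2 : IsPartitionOf lam2 d2) (h2o : IsOrthogonal lam2)
    (h2s : IsSymplectic (ptrans lam2))
    (h2' : IsPartitionOf lam2' d2) (h2o' : IsOrthogonal lam2')
    (h2s' : IsSymplectic (ptrans lam2'))
    (hle1 : NDomLE lam1 lam1') (hle2 : NDomLE lam2 lam2') :
    DomLE (wald lam1 lam2 1 1 (d1+d2)) (wald lam1' lam2' 1 1 (d1+d2)) :=
  stmt8_general d1 d2 hd1 hd2 lam1 lam1' lam2 lam2' h1 h1s h1' h1s' h2 h2s h2' h2s' hle1 hle2
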